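/- For all 0 < m ≤ 2, a, b > 0: 1/θ̃(a,b) − 1/θ_m(a,b) ≤ ((b−a)²/(ab)) · 1/θ̃(a,b), where θ̃ is the harmonic mean and θ_m(a,b) = ∫₀¹ ((1-α)a^{m-1} + α b^{m-1})^{1/(m-1)} dα (interpreted as the logarithmic mean when m = 1). -/

import Mathlib

open Real

/-- The power-difference mean `θ_m`, given by its integral representation for `m ≠ 1`
and by the logarithmic mean (in integral form) for `m = 1`. -/
noncomputable def powerMean (m a b : ℝ) : ℝ :=
  if m = 1 then ∫ α in (0:ℝ)..1, a ^ (1 - α) * b ^ α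
  else ∫ α in (0:ℝ)..1, ((1 - α) * a ^ (m - 1) + α * b ^ (m - 1)) ^ (1 / (m - 1))

/-!
Pointwise in `α`, the integrand of `θ_m` is a weighted power mean of `a` and `b` with exponent
`m - 1 ≤ 1` (the weighted geometric mean when `m = 1`), hence at most the weighted arithmetic mean
`(1 - α) a + α b`: by concavity of `x ↦ x ^ q` for `0 < q ≤ 1`, and through the weighted geometric
mean for `q < 0`. Integrating gives `0 < θ_m(a, b) ≤ (a + b) / 2`, so
`1/θ̃ - 1/θ_m ≤ 1/θ̃ - 2/(a + b) = (b - a)² / (2ab(a + b))`, which is at most the right-hand side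
`(b - a)² (a + b) / (2a²b²)` because `ab ≤ (a + b)²`.
-/

open Set

namespace Real

variable {w₁ w₂ a b q : ℝ}

theorem weighted_rpow_mean2_le_geom_mean2 (hw₁ : 0 ≤ w₁) (hw₂ : 0 ≤ w₂) (hw : w₁ + w₂ = 1)
    (ha : 0 < a) (hb : 0 < b) (hq : q < 0) :
    (w₁ * a ^ q + w₂ * b ^ q) ^ (1 / q) ≤ a ^ w₁ * b ^ w₂ := by
  have hG : 0 < a ^ w₁ * b ^ w₂ := by positivity
  have amgm : (a ^ w₁ * b ^ w₂) ^ q ≤ w₁ * a ^ q + w₂ * b ^ q := by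
    calc (a ^ w₁ * b ^ w₂) ^ q = (a ^ q) ^ w₁ * (b ^ q) ^ w₂ := by
          rw [mul_rpow (by positivity) (by positivity), ← rpow_mul ha.le, ← rpow_mul hb.le,
            mul_comm w₁, mul_comm w₂, rpow_mul ha.le, rpow_mul hb.le]
      _ ≤ w₁ * a ^ q + w₂ * b ^ q :=
          geom_mean_le_arith_mean2_weighted hw₁ hw₂ (by positivity) (by positivity) hw
  calc (w₁ * a ^ q + w₂ * b ^ q) ^ (1 / q)
      ≤ ((a ^ w₁ * b ^ w₂) ^ q) ^ (1 / q) :=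
        rpow_le_rpow_of_nonpos (by positivity) amgm (one_div_neg.mpr hq).le
    _ = a ^ w₁ * b ^ w₂ := by rw [one_div, rpow_rpow_inv hG.le hq.ne]

theorem weighted_rpow_mean2_le_arith_mean2 (hw₁ : 0 ≤ w₁) (hw₂ : 0 ≤ w₂) (hw : w₁ + w₂ = 1)
    (ha : 0 < a) (hb : 0 < b) (hq0 : q ≠ 0) (hq1 : q ≤ 1) :
    (w₁ * a ^ q + w₂ * b ^ q) ^ (1 / q) ≤ w₁ * a + w₂ * b := by
  rcases hq0.lt_or_gt with hq | hq
  · exact (weighted_rpow_mean2_le_geom_mean2 hw₁ hw₂ hw ha hb hq).trans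
      (geom_mean_le_arith_mean2_weighted hw₁ hw₂ ha.le hb.le hw)
  · have concave : w₁ * a ^ q + w₂ * b ^ q ≤ (w₁ * a + w₂ * b) ^ q :=
      (concaveOn_rpow hq.le hq1).2 (mem_Ici.mpr ha.le) (mem_Ici.mpr hb.le) hw₁ hw₂ hw
    calc (w₁ * a ^ q + w₂ * b ^ q) ^ (1 / q) ≤ ((w₁ * a + w₂ * b) ^ q) ^ (1 / q) :=
          rpow_le_rpow (by positivity) concave (by positivity)
      _ = w₁ * a + w₂ * b := by rw [one_div, rpow_rpow_inv (by positivity) hq.ne']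

end Real

theorem integral_zero_one_affine (a b : ℝ) :
    ∫ α in (0 : ℝ)..1, ((1 - α) * a + α * b) = (a + b) / 2 := by
  have affine : ∀ α : ℝ, (1 - α) * a + α * b = a + (b - a) * α := fun α => by ring
  simp_rw [affine]
  rw [intervalIntegral.integral_add intervalIntegrable_const
    (intervalIntegral.intervalIntegrable_id.const_mul _), intervalIntegral.integral_const,
    intervalIntegral.integral_const_mul, integral_id]
  ring

theorem integral_zero_one_mem_Ioc_of_le_affine {f : ℝ → ℝ} {a b : ℝ}
    (hf : ContinuousOn f (Icc 0 1)) (hpos : ∀ α ∈ Icc (0 : ℝ) 1, 0 < f α)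
    (hle : ∀ α ∈ Icc (0 : ℝ) 1, f α ≤ (1 - α) * a + α * b) :
    ∫ α in (0 : ℝ)..1, f α ∈ Ioc 0 ((a + b) / 2) := by
  have hint : IntervalIntegrable f MeasureTheory.volume 0 1 :=
    hf.intervalIntegrable_of_Icc zero_le_one
  refine ⟨intervalIntegral.intervalIntegral_pos_of_pos_on hint
    (fun α hα => hpos α (Ioo_subset_Icc_self hα)) one_pos, ?_⟩
  rw [← integral_zero_one_affine]
  exact intervalIntegral.integral_mono_on zero_le_one hint
    (Continuous.intervalIntegrable (by fun_prop) 0 1) hle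

theorem powerMean_mem_Ioc {m a b : ℝ} (hm : m ≤ 2) (ha : 0 < a) (hb : 0 < b) :
    powerMean m a b ∈ Ioc 0 ((a + b) / 2) := by
  unfold powerMean
  split_ifs with hm1
  · refine integral_zero_one_mem_Ioc_of_le_affine (by fun_prop (disch := positivity))
      (fun α _ => by positivity) fun α hα => ?_
    exact geom_mean_le_arith_mean2_weighted (by linarith [hα.2]) hα.1 ha.le hb.le (by ring)
  · have weights_pos : ∀ α ∈ Icc (0 : ℝ) 1, 0 < (1 - α) * a ^ (m - 1) + α * b ^ (m - 1) :=
      fun α hα => convex_Ioi (0 : ℝ) (rpow_pos_of_pos ha _) (rpow_pos_of_pos hb _)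
        (by linarith [hα.2]) hα.1 (by ring)
    refine integral_zero_one_mem_Ioc_of_le_affine
      ((ContinuousOn.rpow_const (by fun_prop)) fun α hα => Or.inl (weights_pos α hα).ne')
      (fun α hα => rpow_pos_of_pos (weights_pos α hα) _) fun α hα => ?_
    exact weighted_rpow_mean2_le_arith_mean2 (by linarith [hα.2]) hα.1 (by ring) ha hb
      (sub_ne_zero.mpr hm1) (by linarith)

theorem inv_harmonicMean_sub_inv_arithMean_le {a b : ℝ} (ha : 0 < a) (hb : 0 < b) :
    1 / (2 * a * b / (a + b)) - 1 / ((a + b) / 2) ≤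
      ((b - a) ^ 2 / (a * b)) * (1 / (2 * a * b / (a + b))) := by
  calc 1 / (2 * a * b / (a + b)) - 1 / ((a + b) / 2)
      = ((b - a) ^ 2 / (a * b)) * (1 / (2 * (a + b))) := by
        field_simp
        ring
    _ ≤ ((b - a) ^ 2 / (a * b)) * (1 / (2 * a * b / (a + b))) := by
        rw [one_div_div]
        gcongr _ * ?_
        rw [div_le_div_iff₀ (by positivity) (by positivity)]
        nlinarith [mul_pos ha hb]

theorem harmonic_powerMean_comparison_general
    (m : ℝ) (hm2 : m ≤ 2) (a b : ℝ) (ha : 0 < a) (hb : 0 < b) :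
    1 / (2 * a * b / (a + b)) - 1 / powerMean m a b ≤
      ((b - a) ^ 2 / (a * b)) * (1 / (2 * a * b / (a + b))) := by
  obtain ⟨hθ_pos, hθ_le⟩ := powerMean_mem_Ioc hm2 ha hb
  calc 1 / (2 * a * b / (a + b)) - 1 / powerMean m a b
      ≤ 1 / (2 * a * b / (a + b)) - 1 / ((a + b) / 2) := by gcongr
    _ ≤ ((b - a) ^ 2 / (a * b)) * (1 / (2 * a * b / (a + b))) :=
        inv_harmonicMean_sub_inv_arithMean_le ha hb

theorem harmonic_powerMean_comparison
    (m : ℝ) (hm0 : 0 < m) (hm2 : m ≤ 2) (a b : ℝ) (ha : 0 < a) (hb : 0 < b) :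
    1 / (2 * a * b / (a + b)) - 1 / powerMean m a b ≤
      ((b - a) ^ 2 / (a * b)) * (1 / (2 * a * b / (a + b))) :=
  harmonic_powerMean_comparison_general m hm2 a b ha hb
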